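/- Let c, d ∈ ℤ and let q be a positive integer. If 4 ∣ q and E(c,d;q) ≠ 0, then 2 ∣ c. If 9 ∣ q and E(c,d;q) ≠ 0, then 3 ∣ d. -/

import Mathlib

/-!
Write `q = p²m` and `h = pm`, so that `h² ≡ 0 (mod q)`. For every residue `t`, `1 + ht` is a
unit mod `q`, and substituting `z ↦ (1 + ht)z` in `E(c,d;q)` multiplies the summand at `z` by
`e(t·h(3cz³ − 2dz²)/q)`, all higher terms vanishing. Averaging over `t` turns `q·E(c,d;q)` into a
sum of complete character sums, each of which is zero unless `h(3cz − 2d) ≡ 0 (mod q)`. For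
`p = 2` this congruence forces `c` to be even, for `p = 3` it forces `3 ∣ d`.
-/

open scoped BigOperators

/-- `E(c,d;q) = Σ_{z mod q, gcd(z,q)=1} e((cz³ − dz²)/q)`, where `e(x) = exp(2πix)`. -/
noncomputable def expE (c d : ℤ) (q : ℕ) : ℂ :=
  ∑ z ∈ (Finset.range q).filter fun z => Nat.gcd z q = 1,
    Complex.exp (2 * Real.pi * Complex.I *
      (((c : ℂ) * (z : ℂ) ^ 3 - (d : ℂ) * (z : ℂ) ^ 2) / (q : ℂ)))

open Finset

theorem sum_units_addChar_cubic_eq_zero {R R' : Type*} [CommRing R] [Fintype R] [DecidableEq R]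
    [CommRing R'] [IsDomain R'] [CharZero R'] {ψ : AddChar R R'} (hψ : ψ.IsPrimitive)
    {c d h : R} (hh : h ^ 2 = 0) (hne : ∀ u : Rˣ, h * (3 * c * u - 2 * d) ≠ 0) :
    ∑ u : Rˣ, ψ (c * u ^ 3 - d * u ^ 2) = 0 := by
  set F : R → R' := fun x => ψ (c * x ^ 3 - d * x ^ 2)
  have hunit (t : R) : IsUnit (1 + h * t) :=
    IsNilpotent.isUnit_one_add ⟨2, by rw [mul_pow, hh, zero_mul]⟩
  have hshift (t : R) (u : Rˣ) :
      F ↑((hunit t).unit * u) = F u * ψ (t * (h * (3 * c * u ^ 3 - 2 * d * u ^ 2))) := by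
    rw [← ψ.map_add_eq_mul]
    simp only [F, Units.val_mul, IsUnit.unit_spec]
    congr 1
    linear_combination (c * u ^ 3 * (3 * t ^ 2 + h * t ^ 3) - d * u ^ 2 * t ^ 2) * hh
  have hinner (u : Rˣ) : ∑ t : R, ψ (t * (h * (3 * c * u ^ 3 - 2 * d * u ^ 2))) = 0 := by
    have hb : h * (3 * c * u ^ 3 - 2 * d * u ^ 2) = h * (3 * c * u - 2 * d) * ↑(u ^ 2) := by
      push_cast
      ring
    rw [AddChar.sum_mulShift _ hψ,
      if_neg (by rw [hb, Units.mul_left_eq_zero]; exact hne u), Nat.cast_zero]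
  have hcard : (Fintype.card R : R') * ∑ u : Rˣ, F u = 0 := calc
    (Fintype.card R : R') * ∑ u : Rˣ, F u = ∑ t : R, ∑ u : Rˣ, F ↑((hunit t).unit * u) := by
      rw [← Finset.card_univ, ← nsmul_eq_mul, ← sum_const]
      exact sum_congr rfl fun t _ =>
        (Equiv.sum_comp (Equiv.mulLeft (hunit t).unit) (fun u : Rˣ => F u)).symm
    _ = ∑ u : Rˣ, F u * ∑ t : R, ψ (t * (h * (3 * c * u ^ 3 - 2 * d * u ^ 2))) := by
      simp only [hshift, mul_sum]
      exact sum_comm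
    _ = 0 := by simp only [hinner, mul_zero, sum_const_zero]
  exact (mul_eq_zero.mp hcard).resolve_left (by simp)

theorem sum_coprime_range_eq_sum_units {M : Type*} [AddCommMonoid M] (q : ℕ) [NeZero q]
    (g : ZMod q → M) :
    ∑ z ∈ (range q).filter (fun z => z.gcd q = 1), g z = ∑ u : (ZMod q)ˣ, g u := by
  refine sum_bij' (fun z hz => ZMod.unitOfCoprime z (mem_filter.mp hz).2)
    (fun u _ => (u : ZMod q).val) ?_ ?_ ?_ ?_ ?_
  · simp
  · intro u _
    simpa using ⟨ZMod.val_lt _, ZMod.val_coe_unit_coprime u⟩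
  · intro z hz
    simp only [mem_filter, mem_range] at hz
    simp [ZMod.val_natCast, Nat.mod_eq_of_lt hz.1]
  · intro u _
    ext
    simp
  · intro z _
    simp

theorem expE_eq_sum_units (c d : ℤ) (q : ℕ) [NeZero q] :
    expE c d q = ∑ u : (ZMod q)ˣ,
      ZMod.stdAddChar ((c : ZMod q) * (u : ZMod q) ^ 3 - (d : ZMod q) * (u : ZMod q) ^ 2) := by
  rw [expE, ← sum_coprime_range_eq_sum_units q
    (fun x => ZMod.stdAddChar ((c : ZMod q) * x ^ 3 - (d : ZMod q) * x ^ 2))]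
  refine sum_congr rfl fun z _ => ?_
  have := ZMod.stdAddChar_coe (N := q) (c * z ^ 3 - d * z ^ 2)
  push_cast at this
  rw [this, mul_div_assoc]

theorem expE_eq_zero_of_dvd_sq (c d : ℤ) {q h : ℕ} [NeZero q] (hh : q ∣ h ^ 2)
    (hne : ∀ u : (ZMod q)ˣ, (h : ZMod q) * (3 * c * u - 2 * d) ≠ 0) : expE c d q = 0 := by
  rw [expE_eq_sum_units]
  refine sum_units_addChar_cubic_eq_zero (ZMod.isPrimitive_stdAddChar q) ?_ hne
  exact_mod_cast (ZMod.natCast_eq_zero_iff _ _).mpr hh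

theorem dvd_of_intCast_mul_eq_zero {k m : ℕ} (hm : m ≠ 0) {n : ℤ}
    (h : ((n * m : ℤ) : ZMod (k * m)) = 0) : (k : ℤ) ∣ n := by
  rw [ZMod.intCast_zmod_eq_zero_iff_dvd] at h
  push_cast at h
  exact (mul_dvd_mul_iff_right (by exact_mod_cast hm)).mp h

theorem two_dvd_of_expE_ne_zero (c d : ℤ) {m : ℕ} (hm : m ≠ 0) (hE : expE c d (4 * m) ≠ 0) :
    2 ∣ c := by
  have : NeZero (4 * m) := ⟨by omega⟩
  by_contra hc
  refine hE (expE_eq_zero_of_dvd_sq c d (h := 2 * m) ⟨m, by ring⟩ fun u hu => ?_)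
  have hq := ZMod.natCast_self (4 * m)
  have hexpand : ((2 * m : ℕ) : ZMod (4 * m)) * (3 * c * u - 2 * d)
      = ((c * 6 * m : ℤ) : ZMod (4 * m)) * u := by
    push_cast at hq ⊢
    linear_combination (-(d : ZMod (4 * m))) * hq
  rw [hexpand, Units.mul_left_eq_zero] at hu
  have := dvd_of_intCast_mul_eq_zero hm hu
  omega

theorem three_dvd_of_expE_ne_zero (c d : ℤ) {m : ℕ} (hm : m ≠ 0) (hE : expE c d (9 * m) ≠ 0) :
    3 ∣ d := by
  have : NeZero (9 * m) := ⟨by omega⟩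
  by_contra hd
  refine hE (expE_eq_zero_of_dvd_sq c d (h := 3 * m) ⟨m, by ring⟩ fun u hu => ?_)
  have hq := ZMod.natCast_self (9 * m)
  have hexpand : ((3 * m : ℕ) : ZMod (9 * m)) * (3 * c * u - 2 * d)
      = ((-(d * 6) * m : ℤ) : ZMod (9 * m)) := by
    push_cast at hq ⊢
    linear_combination (c * (u : ZMod (9 * m))) * hq
  rw [hexpand] at hu
  have := dvd_of_intCast_mul_eq_zero hm hu
  omega

theorem stmt11 (c d : ℤ) (q : ℕ) (hq : 0 < q) :
    (4 ∣ q → expE c d q ≠ 0 → 2 ∣ c) ∧ (9 ∣ q → expE c d q ≠ 0 → 3 ∣ d) := by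
  constructor
  · rintro ⟨m, rfl⟩
    exact two_dvd_of_expE_ne_zero c d (by omega)
  · rintro ⟨m, rfl⟩
    exact three_dvd_of_expE_ne_zero c d (by omega)
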